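/- arXiv:1201.2283 — 2 statements merged into one kernel-verified Lean document; each statement's English description precedes it below -/
import Mathlib

section
/- Localization of the large eigenvalues of R: For any given ε > 0 and s > 0 there is some a > 0, depending only on ε and s, such that for any N ≥ 1, the set { k ∈ ⟦1, 2N⟧ : |ν_k| > s } is contained in ⟦1, a⟧ ∪ ⟦2N+1−a, 2N⟧. -/
/-!
`ν_k` is the discrete Fourier coefficient, at the root of unity `ω = e^{iπk/N}`, of the
sequence `j ↦ R_{0,j}`, which decreases on `⟦0, N⟧` and increases on `⟦N, 2N - 1⟧`.
Summation by parts against the geometric sums `∑_{j<n} ω^j`, each of norm at most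
`2 / |ω - 1| ≤ N / min(k, 2N - k)` by Jordan's inequality, together with the bound `2 R_{0,0}`
on the total variation of this tent-shaped sequence, gives
`min(k, 2N - k) |ν_k| ≤ 2 ε^{2/3} / ε²` uniformly in `N`, so `|ν_k| > s` forces
`min(k, 2N - k) < 2 ε^{2/3} / (ε² s)`.
-/

open MeasureTheory Real Finset

noncomputable section

/-- The representative of n modulo 2N lying in ⟦−N+1, N⟧. -/
def mmod (N : ℕ) (n : ℤ) : ℤ := (n + ((N : ℤ) - 1)) % (2 * (N : ℤ)) - ((N : ℤ) - 1)

/-- The translation-invariant distance d(k,ℓ) = |m(k−ℓ)| on ⟦−N+1,N⟧ viewed modulo 2N. -/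
def refDist (N : ℕ) (k l : ℤ) : ℤ := |mmod N (k - l)|

/-- The circulant matrix R^{(ε)}_{k,ℓ} = (1/N) ε^{2/3}/(d(k,ℓ)²/N² + ε²). -/
def Rmat (ε : ℝ) (N : ℕ) (k l : ℤ) : ℝ :=
  (1 / (N : ℝ)) * ε ^ ((2 : ℝ) / 3) / (((refDist N k l : ℤ) : ℝ) ^ 2 / (N : ℝ) ^ 2 + ε ^ 2)

/-- The reflected matrix Q^{(ε)}_{i,j}. -/
def Qmat (ε : ℝ) (N : ℕ) (i j : ℤ) : ℝ :=
  Rmat ε N i j + Rmat ε N (1 - i) j + Rmat ε N i (1 - j) + Rmat ε N (1 - i) (1 - j)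
/-- The eigenvalues ν_k of the circulant matrix R^{(ε)}. -/
def nuEig (ε : ℝ) (N : ℕ) (k : ℤ) : ℂ :=
  ∑ j ∈ Finset.range (2 * N),
    Complex.exp (Complex.I * 2 * (π : ℂ) * (j : ℂ) * (k : ℂ) / (2 * (N : ℂ))) *
      ((Rmat ε N 0 (j : ℤ) : ℝ) : ℂ)

/-- The normalized eigenvector u_k of the circulant matrix R^{(ε)}. -/
def uVec (N : ℕ) (k j : ℤ) : ℂ :=
  ((Real.sqrt (2 * N) : ℝ) : ℂ)⁻¹ *
    Complex.exp (Complex.I * 2 * (π : ℂ) * (j : ℂ) * (k : ℂ) / (2 * (N : ℂ)))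

section SummationByParts

variable {𝕜 : Type*} [NormedField 𝕜]

theorem norm_geom_sum_le_of_norm_eq_one {ω : 𝕜} (hω : ‖ω‖ = 1) (hω1 : ω ≠ 1) (n : ℕ) :
    ‖∑ j ∈ range n, ω ^ j‖ ≤ 2 / ‖ω - 1‖ := by
  rw [geom_sum_eq hω1, norm_div]
  gcongr
  calc ‖ω ^ n - 1‖ ≤ ‖ω ^ n‖ + ‖(1 : 𝕜)‖ := norm_sub_le _ _
    _ = 2 := by rw [norm_pow, hω, one_pow, norm_one]; norm_num

theorem norm_sum_mul_pow_le_of_pow_eq_one (f : ℕ → 𝕜) {ω : 𝕜} {n : ℕ} (hω : ‖ω‖ = 1)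
    (hω1 : ω ≠ 1) (hωn : ω ^ n = 1) :
    ‖∑ j ∈ range n, f j * ω ^ j‖ ≤
      (∑ i ∈ range (n - 1), ‖f (i + 1) - f i‖) * (2 / ‖ω - 1‖) := by
  have hgeom : ∑ j ∈ range n, ω ^ j = 0 := by rw [geom_sum_eq hω1, hωn, sub_self, zero_div]
  have hparts := Finset.sum_range_by_parts f (fun j => ω ^ j) n
  simp only [smul_eq_mul, hgeom, mul_zero, zero_sub] at hparts
  rw [hparts, norm_neg, Finset.sum_mul]
  refine (norm_sum_le _ _).trans (Finset.sum_le_sum fun i _ => ?_)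
  rw [norm_mul]
  exact mul_le_mul_of_nonneg_left (norm_geom_sum_le_of_norm_eq_one hω hω1 _) (norm_nonneg _)

end SummationByParts

theorem sum_range_abs_sub_of_monotone {f : ℕ → ℝ} (hf : Monotone f) (n : ℕ) :
    ∑ i ∈ range n, |f (i + 1) - f i| = f n - f 0 := by
  rw [← Finset.sum_range_sub]
  exact sum_congr rfl fun i _ => abs_of_nonneg (sub_nonneg.2 (hf i.le_succ))

theorem sum_range_abs_sub_of_antitone {f : ℕ → ℝ} (hf : Antitone f) (n : ℕ) :
    ∑ i ∈ range n, |f (i + 1) - f i| = f 0 - f n := by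
  rw [← Finset.sum_range_sub']
  exact sum_congr rfl fun i _ => by rw [abs_sub_comm, abs_of_nonneg (sub_nonneg.2 (hf i.le_succ))]

theorem sum_range_abs_sub_tent_le {g : ℕ → ℝ} (hg : Antitone g) (N : ℕ) :
    ∑ i ∈ range (2 * N - 1),
        |g (min (i + 1) (2 * N - (i + 1))) - g (min i (2 * N - i))| ≤ 2 * (g 0 - g N) := by
  rw [show 2 * N - 1 = N + (N - 1) by omega, Finset.sum_range_add]
  have hdown : ∑ i ∈ range N, |g (min (i + 1) (2 * N - (i + 1))) - g (min i (2 * N - i))| =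
      ∑ i ∈ range N, |g (i + 1) - g i| := by
    refine sum_congr rfl fun i hi => ?_
    rw [mem_range] at hi
    rw [min_eq_left (by omega), min_eq_left (by omega)]
  have hup : ∑ i ∈ range (N - 1), |g (min (N + i + 1) (2 * N - (N + i + 1))) -
        g (min (N + i) (2 * N - (N + i)))| =
      ∑ i ∈ range (N - 1), |g (N - (i + 1)) - g (N - i)| := by
    refine sum_congr rfl fun i hi => ?_
    rw [mem_range] at hi
    rw [min_eq_right (by omega), min_eq_right (by omega)]
    congr 3 <;> omega
  have hreflect : Monotone fun i => g (N - i) :=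
    hg.comp fun _ _ h => Nat.sub_le_sub_left h N
  rw [hdown, hup, sum_range_abs_sub_of_antitone hg,
    sum_range_abs_sub_of_monotone hreflect, Nat.sub_zero]
  linarith [hg (Nat.zero_le (N - (N - 1)))]

theorem two_div_pi_mul_min_le_sin {θ : ℝ} (h0 : 0 ≤ θ) (hπ : θ ≤ π) :
    2 / π * min θ (π - θ) ≤ sin θ := by
  rcases le_total θ (π / 2) with h | h
  · exact (mul_le_mul_of_nonneg_left (min_le_left _ _) (by positivity)).trans
      (mul_le_sin h0 h)
  · rw [← sin_pi_sub]
    exact (mul_le_mul_of_nonneg_left (min_le_right _ _) (by positivity)).trans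
      (mul_le_sin (by linarith) (by linarith))

theorem two_div_pi_mul_min_le_norm_exp_sub_one {θ : ℝ} (h0 : 0 ≤ θ) (h2π : θ ≤ 2 * π) :
    2 / π * min θ (2 * π - θ) ≤ ‖Complex.exp (Complex.I * θ) - 1‖ := by
  rw [Complex.norm_exp_I_mul_ofReal_sub_one, Real.norm_eq_abs]
  have hsin := two_div_pi_mul_min_le_sin (θ := θ / 2) (by linarith) (by linarith)
  calc 2 / π * min θ (2 * π - θ) = 2 * (2 / π * min (θ / 2) (π - θ / 2)) := by
        rw [show min θ (2 * π - θ) = 2 * min (θ / 2) (π - θ / 2) by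
          rw [mul_min_of_nonneg _ _ two_pos.le]; ring_nf]
        ring
    _ ≤ |2 * sin (θ / 2)| := by rw [abs_mul, abs_two]; gcongr; exact hsin.trans (le_abs_self _)

def lorentzProfile (ε : ℝ) (N : ℕ) (d : ℝ) : ℝ :=
  1 / (N : ℝ) * ε ^ ((2 : ℝ) / 3) / (d ^ 2 / (N : ℝ) ^ 2 + ε ^ 2)

theorem Rmat_eq_lorentzProfile (ε : ℝ) (N : ℕ) (k l : ℤ) :
    Rmat ε N k l = lorentzProfile ε N (refDist N k l) := rfl

theorem antitone_lorentzProfile_natCast {ε : ℝ} (hε : 0 < ε) (N : ℕ) :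
    Antitone fun d : ℕ => lorentzProfile ε N d := fun d e hde => by
  unfold lorentzProfile
  apply div_le_div_of_nonneg_left (by positivity) (by positivity)
  gcongr

theorem lorentzProfile_nonneg {ε : ℝ} (hε : 0 < ε) (N : ℕ) (d : ℝ) :
    0 ≤ lorentzProfile ε N d := by
  unfold lorentzProfile; positivity

theorem refDist_self (N : ℕ) (k : ℤ) : refDist N k k = 0 := by
  unfold refDist mmod
  rcases N.eq_zero_or_pos with rfl | hN
  · simp
  · rw [sub_self, zero_add, Int.emod_eq_of_lt (by omega) (by omega), sub_self, abs_zero]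

theorem refDist_zero_natCast {N j : ℕ} (hj : j < 2 * N) :
    refDist N 0 j = (min j (2 * N - j) : ℕ) := by
  unfold refDist mmod
  rcases le_or_gt (j : ℤ) (N - 1) with h | h
  · rw [Int.emod_eq_of_lt (by omega) (by omega), abs_eq_max_neg]
    omega
  · rw [← Int.add_mul_emod_self_left (c := 1), Int.emod_eq_of_lt (by omega) (by omega),
      abs_eq_max_neg]
    omega

theorem sum_range_abs_sub_Rmat_le {ε : ℝ} (hε : 0 < ε) (N : ℕ) :
    ∑ i ∈ range (2 * N - 1), |Rmat ε N 0 ((i + 1 : ℕ) : ℤ) - Rmat ε N 0 (i : ℕ)| ≤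
      2 * Rmat ε N 0 0 := by
  set g : ℕ → ℝ := fun d => lorentzProfile ε N d
  have htent : ∀ j < 2 * N, Rmat ε N 0 j = g (min j (2 * N - j)) := fun j hj => by
    rw [Rmat_eq_lorentzProfile, refDist_zero_natCast hj, Int.cast_natCast]
  calc _ = ∑ i ∈ range (2 * N - 1),
        |g (min (i + 1) (2 * N - (i + 1))) - g (min i (2 * N - i))| :=
        sum_congr rfl fun i hi => by
          rw [mem_range] at hi
          rw [htent (i + 1) (by omega), htent i (by omega)]
    _ ≤ 2 * (g 0 - g N) := sum_range_abs_sub_tent_le (antitone_lorentzProfile_natCast hε N) N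
    _ ≤ 2 * Rmat ε N 0 0 := by
        have : Rmat ε N 0 0 = g 0 := by simp [Rmat_eq_lorentzProfile, refDist_self, g]
        linarith [lorentzProfile_nonneg hε N N]

theorem nuEig_eq_sum_mul_pow (ε : ℝ) (N : ℕ) (k : ℤ) :
    nuEig ε N k = ∑ j ∈ range (2 * N),
      (Rmat ε N 0 j : ℂ) * Complex.exp (Complex.I * (π * k / N : ℝ)) ^ j := by
  refine sum_congr rfl fun j _ => ?_
  rw [mul_comm, ← Complex.exp_nat_mul]
  push_cast
  ring_nf

theorem two_mul_min_div_le_norm_exp_sub_one {N : ℕ} (hN : 1 ≤ N) {k : ℝ} (hk0 : 0 ≤ k)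
    (hk : k ≤ 2 * N) :
    2 * min k (2 * N - k) / N ≤ ‖Complex.exp (Complex.I * (π * k / N : ℝ)) - 1‖ := by
  have hNR : (0 : ℝ) < N := by exact_mod_cast hN
  convert two_div_pi_mul_min_le_norm_exp_sub_one (θ := π * k / N) (by positivity)
    (by rw [div_le_iff₀ hNR]; nlinarith [pi_pos]) using 1
  rw [show 2 * π - π * k / N = π / N * (2 * N - k) by field_simp,
    show π * k / N = π / N * k by ring, ← mul_min_of_nonneg _ _ (by positivity)]
  field_simp

theorem exp_I_mul_pi_mul_div_pow_two_mul {N : ℕ} (hN : 1 ≤ N) (k : ℤ) :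
    Complex.exp (Complex.I * (π * k / N : ℝ)) ^ (2 * N) = 1 := by
  have hNC : (N : ℂ) ≠ 0 := by exact_mod_cast (by omega : N ≠ 0)
  rw [← Complex.exp_nat_mul, show ((2 * N : ℕ) : ℂ) * (Complex.I * (π * k / N : ℝ)) =
    k * (2 * π * Complex.I) by push_cast; field_simp]
  exact Complex.exp_int_mul_two_pi_mul_I k

theorem min_mul_norm_nuEig_le {ε : ℝ} (hε : 0 < ε) {N : ℕ} (hN : 1 ≤ N) {k : ℤ} (hk0 : 0 ≤ k)
    (hk : k ≤ 2 * N) :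
    min (k : ℝ) (2 * N - k) * ‖nuEig ε N k‖ ≤ 2 * ε ^ ((2 : ℝ) / 3) / ε ^ 2 := by
  have hNR : (0 : ℝ) < N := by exact_mod_cast hN
  have hkR : (0 : ℝ) ≤ k ∧ (k : ℝ) ≤ 2 * N := by exact_mod_cast And.intro hk0 hk
  set m := min (k : ℝ) (2 * N - k)
  set ω := Complex.exp (Complex.I * (π * k / N : ℝ))
  rcases (show 0 ≤ m from le_min hkR.1 (by linarith)).eq_or_lt with hm | hm
  · rw [← hm, zero_mul]; positivity
  have hchord : 2 * m / N ≤ ‖ω - 1‖ := two_mul_min_div_le_norm_exp_sub_one hN hkR.1 hkR.2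
  have hω1 : ω ≠ 1 := fun h => by
    rw [h, sub_self, norm_zero] at hchord
    linarith [show 0 < 2 * m / N by positivity]
  have hsum := norm_sum_mul_pow_le_of_pow_eq_one (fun j : ℕ => (Rmat ε N 0 j : ℂ))
    (Complex.norm_exp_I_mul_ofReal _) hω1 (exp_I_mul_pi_mul_div_pow_two_mul hN k)
  rw [← nuEig_eq_sum_mul_pow] at hsum
  have hvar : ∑ i ∈ range (2 * N - 1),
      ‖(Rmat ε N 0 ((i + 1 : ℕ) : ℤ) : ℂ) - Rmat ε N 0 (i : ℕ)‖ ≤ 2 * Rmat ε N 0 0 := by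
    simpa only [← Complex.ofReal_sub, Complex.norm_real, Real.norm_eq_abs]
      using sum_range_abs_sub_Rmat_le hε N
  have hgeom : 2 / ‖ω - 1‖ ≤ N / m := by
    rw [div_le_div_iff₀ (norm_pos_iff.2 (sub_ne_zero.2 hω1)) hm]
    rw [div_le_iff₀ hNR] at hchord
    linarith
  have hR : 0 ≤ Rmat ε N 0 0 := lorentzProfile_nonneg hε N _
  calc m * ‖nuEig ε N k‖ ≤ m * (2 * Rmat ε N 0 0 * (N / m)) := by
        gcongr
        exact hsum.trans (mul_le_mul hvar hgeom (by positivity) (by positivity))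
    _ = 2 * ε ^ ((2 : ℝ) / 3) / ε ^ 2 := by
        rw [Rmat_eq_lorentzProfile, refDist_self]
        unfold lorentzProfile
        field_simp [hm.ne']
        ring

/-- Localization of the large eigenvalues of R^{(ε)}: all eigenvalues of modulus larger
than s have index within a bounded distance from 0 or 2N. -/
theorem large_eigenvalue_localization (ε s : ℝ) (hε : 0 < ε) (hs : 0 < s) :
    ∃ a : ℝ, 0 < a ∧ ∀ (N : ℕ), 1 ≤ N → ∀ k ∈ Finset.Icc (1 : ℤ) (2 * (N : ℤ)),
      s < ‖nuEig ε N k‖ → ((k : ℝ) ≤ a ∨ 2 * (N : ℝ) + 1 - a ≤ (k : ℝ)) := by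
  set C := 2 * ε ^ ((2 : ℝ) / 3) / ε ^ 2
  refine ⟨C / s + 1, by positivity, fun N hN k hk hlarge => ?_⟩
  rw [Finset.mem_Icc] at hk
  have hkR : (1 : ℝ) ≤ k ∧ (k : ℝ) ≤ 2 * N := by exact_mod_cast hk
  have hmin : min (k : ℝ) (2 * N - k) ≤ C / s := by
    rw [le_div_iff₀ hs]
    calc min (k : ℝ) (2 * N - k) * s ≤ min (k : ℝ) (2 * N - k) * ‖nuEig ε N k‖ :=
          mul_le_mul_of_nonneg_left hlarge.le (le_min (by linarith) (by linarith))
      _ ≤ C := min_mul_norm_nuEig_le hε hN (by omega) hk.2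
  rcases min_choice (k : ℝ) (2 * N - k) with h | h <;> rw [h] at hmin
  · exact Or.inl (by linarith)
  · exact Or.inr (by linarith)
end
end

section
/- Summation by parts bound for the eigenvalues of R: There is a constant c(ε) > 0 depending only on ε such that for any N ≥ 1 and any k ∈ ⟦1, 2N−1⟧, |ν_k| ≤ c(ε) / ( N |1 − e^{i 2π k/(2N)}| ). -/
open MeasureTheory Real Finset

noncomputable section

/-! Write ω = e^{iπk/N}, a 2N-th root of unity different from 1, and r_j = R_{0,j}, which is
2N-periodic in j. Abel summation gives (ω - 1) ν_k = ω ∑_j ω^j (r_j - r_{j+1}), so |1 - ω| |ν_k|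
is bounded by the total variation of r over one period. As r_j decreases with the circular
distance of j to 0, it decreases on ⟦0, N⟧ and increases on ⟦N, 2N⟧, so this total variation is
2 (r_0 - r_N) ≤ 2 r_0 = 2 ε^{2/3} / (ε² N). -/

theorem sub_one_mul_sum_range_pow_mul {R : Type*} [CommRing R] {ω : R} {n : ℕ}
    (hω : ω ^ n = 1) (f : ℕ → R) (hf : f n = f 0) :
    (ω - 1) * ∑ j ∈ range n, ω ^ j * f j = ω * ∑ j ∈ range n, ω ^ j * (f j - f (j + 1)) := by
  have hshift : ∑ j ∈ range n, ω ^ j * f j = ω * ∑ j ∈ range n, ω ^ j * f (j + 1) := by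
    have h := (sum_range_succ' (fun j => ω ^ j * f j) n).symm.trans
      (sum_range_succ (fun j => ω ^ j * f j) n)
    rw [hω, hf, pow_zero] at h
    rw [mul_sum, ← add_right_cancel h]
    exact sum_congr rfl fun j _ => by ring
  rw [sub_mul, one_mul]
  nth_rewrite 2 [hshift]
  simp only [← mul_sub, ← sum_sub_distrib]

theorem norm_sub_one_mul_norm_sum_range_pow_mul_le {ω : ℂ} {n : ℕ} (hω : ω ^ n = 1)
    (hω₁ : ‖ω‖ = 1) (f : ℕ → ℝ) (hf : f n = f 0) :
    ‖ω - 1‖ * ‖∑ j ∈ range n, ω ^ j * (f j : ℂ)‖ ≤ ∑ j ∈ range n, |f j - f (j + 1)| := by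
  rw [← norm_mul, sub_one_mul_sum_range_pow_mul hω _ (by exact_mod_cast hf), norm_mul, hω₁,
    one_mul]
  refine (norm_sum_le _ _).trans_eq (sum_congr rfl fun j _ => ?_)
  rw [norm_mul, norm_pow, hω₁, one_pow, one_mul, ← Complex.ofReal_sub, Complex.norm_real,
    Real.norm_eq_abs]

theorem sum_range_abs_sub_succ_of_antitone {f : ℕ → ℝ} {n : ℕ}
    (hf : ∀ j < n, f (j + 1) ≤ f j) :
    ∑ j ∈ range n, |f j - f (j + 1)| = f 0 - f n := by
  rw [← sum_range_sub']
  exact sum_congr rfl fun j hj => abs_of_nonneg (sub_nonneg.2 (hf j (mem_range.1 hj)))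

theorem sum_range_abs_sub_succ_of_monotone {f : ℕ → ℝ} {n : ℕ}
    (hf : ∀ j < n, f j ≤ f (j + 1)) :
    ∑ j ∈ range n, |f j - f (j + 1)| = f n - f 0 := by
  rw [← sum_range_sub]
  refine sum_congr rfl fun j hj => ?_
  rw [abs_sub_comm, abs_of_nonneg (sub_nonneg.2 (hf j (mem_range.1 hj)))]

theorem sum_range_add_abs_sub_succ_of_antitone_of_monotone {f : ℕ → ℝ} {m n : ℕ}
    (hdecr : ∀ j < m, f (j + 1) ≤ f j) (hincr : ∀ j, m ≤ j → j < m + n → f j ≤ f (j + 1)) :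
    ∑ j ∈ range (m + n), |f j - f (j + 1)| = (f 0 - f m) + (f (m + n) - f m) := by
  rw [sum_range_add, sum_range_abs_sub_succ_of_antitone hdecr]
  congr 1
  exact sum_range_abs_sub_succ_of_monotone (f := fun j => f (m + j))
    fun j hj => hincr (m + j) (by omega) (by omega)

theorem mmod_eq_self {N : ℕ} {n : ℤ} (h₀ : -(N : ℤ) < n) (h₁ : n ≤ N) : mmod N n = n := by
  rw [mmod, Int.emod_eq_of_lt (by omega) (by omega)]
  ring

theorem mmod_add_two_mul (N : ℕ) (n : ℤ) : mmod N (n + 2 * N) = mmod N n := by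
  rw [mmod, mmod, add_right_comm, Int.add_emod_right]

theorem refDist_zero_left_of_ge {N : ℕ} (hN : 0 < N) {j : ℤ} (h₀ : N ≤ j)
    (h₁ : j ≤ 2 * N) : refDist N 0 j = 2 * N - j := by
  rw [refDist, ← mmod_add_two_mul, mmod_eq_self (by omega) (by omega),
    abs_of_nonneg (by omega)]
  ring

theorem refDist_zero_left_of_le {N : ℕ} (hN : 0 < N) {j : ℤ} (h₀ : 0 ≤ j) (h₁ : j ≤ N) :
    refDist N 0 j = j := by
  rcases h₁.lt_or_eq with h | rfl
  · rw [refDist, zero_sub, mmod_eq_self (by omega) (by omega), abs_neg, abs_of_nonneg h₀]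
  · rw [refDist_zero_left_of_ge hN le_rfl (by omega)]
    ring

theorem Rmat_le_Rmat_of_refDist_le {ε : ℝ} (hε : 0 < ε) {N : ℕ} {k l k' l' : ℤ}
    (h : refDist N k l ≤ refDist N k' l') : Rmat ε N k' l' ≤ Rmat ε N k l := by
  have h₀ : (0 : ℝ) ≤ refDist N k l := by exact_mod_cast abs_nonneg _
  have h₁ : (refDist N k l : ℝ) ≤ refDist N k' l' := by exact_mod_cast h
  unfold Rmat
  gcongr

theorem Rmat_eq_Rmat_of_refDist_eq {ε : ℝ} {N : ℕ} {k l k' l' : ℤ}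
    (h : refDist N k l = refDist N k' l') : Rmat ε N k l = Rmat ε N k' l' := by
  rw [Rmat, Rmat, h]

theorem Rmat_zero_two_mul {ε : ℝ} {N : ℕ} (hN : 0 < N) :
    Rmat ε N 0 (2 * N : ℕ) = Rmat ε N 0 0 :=
  Rmat_eq_Rmat_of_refDist_eq <| by
    rw [refDist_zero_left_of_ge hN (by omega) (by omega),
      refDist_zero_left_of_le hN le_rfl (by omega)]
    push_cast
    ring

theorem sum_range_abs_sub_Rmat {ε : ℝ} (hε : 0 < ε) {N : ℕ} (hN : 0 < N) :
    ∑ j ∈ range (2 * N), |Rmat ε N 0 j - Rmat ε N 0 (j + 1 : ℕ)| =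
      2 * (Rmat ε N 0 0 - Rmat ε N 0 N) := by
  have hdecr : ∀ j < N, Rmat ε N 0 (j + 1 : ℕ) ≤ Rmat ε N 0 j := fun j hj =>
    Rmat_le_Rmat_of_refDist_le hε <| by
      rw [refDist_zero_left_of_le hN (by omega) (by omega),
        refDist_zero_left_of_le hN (by omega) (by omega)]
      omega
  have hincr : ∀ j, N ≤ j → j < N + N → Rmat ε N 0 j ≤ Rmat ε N 0 (j + 1 : ℕ) :=
    fun j hj hj' =>
    Rmat_le_Rmat_of_refDist_le hε <| by
      rw [refDist_zero_left_of_ge hN (by omega) (by omega),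
        refDist_zero_left_of_ge hN (by omega) (by omega)]
      omega
  rw [two_mul N, sum_range_add_abs_sub_succ_of_antitone_of_monotone
    (f := fun j : ℕ => Rmat ε N 0 j) hdecr hincr, ← two_mul, Rmat_zero_two_mul hN,
    Nat.cast_zero]
  ring

theorem norm_sub_one_mul_norm_sum_pow_mul_Rmat_le {ε : ℝ} (hε : 0 < ε) {N : ℕ} (hN : 0 < N)
    {ω : ℂ} (hω : ω ^ (2 * N) = 1) (hω₁ : ‖ω‖ = 1) :
    ‖ω - 1‖ * ‖∑ j ∈ range (2 * N), ω ^ j * (Rmat ε N 0 j : ℂ)‖ ≤ 2 * Rmat ε N 0 0 := by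
  refine (norm_sub_one_mul_norm_sum_range_pow_mul_le hω hω₁ (fun j : ℕ => Rmat ε N 0 j)
    (by simpa using Rmat_zero_two_mul hN)).trans ?_
  have : 0 ≤ Rmat ε N 0 N := by unfold Rmat; positivity
  rw [sum_range_abs_sub_Rmat hε hN]
  linarith

theorem Rmat_zero_zero {ε : ℝ} {N : ℕ} (hN : 0 < N) :
    Rmat ε N 0 0 = ε ^ ((2 : ℝ) / 3) / ε ^ 2 / N := by
  rw [Rmat, refDist_zero_left_of_le hN le_rfl (Nat.cast_nonneg N)]
  simp
  ring

theorem nuEig_eq_sum_range_pow_mul (ε : ℝ) (N : ℕ) (k : ℤ) :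
    nuEig ε N k = ∑ j ∈ range (2 * N),
      Complex.exp (Complex.I * 2 * π * k / (2 * N)) ^ j * (Rmat ε N 0 j : ℂ) := by
  refine sum_congr rfl fun j _ => ?_
  rw [← Complex.exp_nat_mul]
  ring_nf

theorem exp_I_mul_div_eq_zpow (N : ℕ) (k : ℤ) :
    Complex.exp (Complex.I * 2 * π * k / (2 * N)) =
      Complex.exp (2 * π * Complex.I / (2 * N : ℕ)) ^ k := by
  rw [← Complex.exp_int_mul]
  push_cast
  ring_nf

theorem exp_I_mul_div_pow_two_mul {N : ℕ} (hN : 0 < N) (k : ℤ) :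
    Complex.exp (Complex.I * 2 * π * k / (2 * N)) ^ (2 * N) = 1 := by
  rw [exp_I_mul_div_eq_zpow, ← zpow_natCast, ← zpow_mul, mul_comm k, zpow_mul, zpow_natCast,
    (Complex.isPrimitiveRoot_exp (2 * N) (by omega)).pow_eq_one, one_zpow]

theorem norm_exp_I_mul_div {N : ℕ} (hN : 0 < N) (k : ℤ) :
    ‖Complex.exp (Complex.I * 2 * π * k / (2 * N))‖ = 1 := by
  rw [exp_I_mul_div_eq_zpow, norm_zpow,
    (Complex.isPrimitiveRoot_exp (2 * N) (by omega)).norm'_eq_one (by omega), one_zpow]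

theorem exp_I_mul_div_ne_one {N : ℕ} {k : ℤ} (hk₀ : 0 < k) (hk₁ : k < 2 * N) :
    Complex.exp (Complex.I * 2 * π * k / (2 * N)) ≠ 1 := by
  rw [exp_I_mul_div_eq_zpow, Ne,
    (Complex.isPrimitiveRoot_exp (2 * N) (by omega)).zpow_eq_one_iff_dvd]
  intro h
  have := Int.le_of_dvd hk₀ h
  omega

/-- Summation by parts bound for the eigenvalues of R^{(ε)}. -/
theorem eigenvalue_summation_by_parts (ε : ℝ) (hε : 0 < ε) :
    ∃ c : ℝ, 0 < c ∧ ∀ (N : ℕ), 1 ≤ N → ∀ k ∈ Finset.Icc (1 : ℤ) (2 * (N : ℤ) - 1),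
      ‖nuEig ε N k‖ ≤
        c / ((N : ℝ) *
          ‖1 - Complex.exp (Complex.I * 2 * (π : ℂ) * (k : ℂ) / (2 * (N : ℂ)))‖) := by
  refine ⟨2 * (ε ^ ((2 : ℝ) / 3) / ε ^ 2), by positivity, fun N hN k hk => ?_⟩
  rw [mem_Icc] at hk
  set ω := Complex.exp (Complex.I * 2 * π * k / (2 * N))
  have hω : 0 < ‖ω - 1‖ :=
    norm_pos_iff.2 (sub_ne_zero.2 (exp_I_mul_div_ne_one (by omega) (by omega)))
  have hN' : (0 : ℝ) < N := by exact_mod_cast hN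
  rw [norm_sub_rev, le_div_iff₀ (by positivity)]
  calc ‖nuEig ε N k‖ * (N * ‖ω - 1‖) = N * (‖ω - 1‖ * ‖nuEig ε N k‖) := by ring
    _ ≤ N * (2 * Rmat ε N 0 0) := by
      rw [nuEig_eq_sum_range_pow_mul]
      gcongr N * ?_
      exact norm_sub_one_mul_norm_sum_pow_mul_Rmat_le hε hN (exp_I_mul_div_pow_two_mul hN k)
        (norm_exp_I_mul_div hN k)
    _ = 2 * (ε ^ ((2 : ℝ) / 3) / ε ^ 2) := by
      rw [Rmat_zero_zero hN]
      field_simp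
end
end
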